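/- arXiv:1804.01762 — 4 statements merged into one kernel-verified Lean document; each statement's English description precedes it below -/
import Mathlib

section
/- The number of permutations of {1,...,n} with saillance composition I = (i₁,...,i_r) equals n! / (i₁ · (i₁+i₂) · ⋯ · (i₁+⋯+i_r)). -/
open scoped Classical

/-- A word is *initially dominated* if its first letter is strictly greater
than all subsequent letters. -/
def initiallyDominated (w : List ℕ) : Prop :=
  w ≠ [] ∧ ∀ a ∈ w.tail, a < w.head!

/-- Positions (0-indexed) of the left-to-right maxima of a word. -/
def lrMaxPositions (w : List ℕ) : List ℕ :=
  (List.range w.length).filter (fun i => decide (∀ j < i, w[j]! < w[i]!))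

/-- The saillance composition of a word: gaps between consecutive
left-to-right maxima positions. -/
def SC (w : List ℕ) : List ℕ :=
  List.zipWith (fun a b => a - b) ((lrMaxPositions w).tail ++ [w.length]) (lrMaxPositions w)

/-- The word (one-line notation, values in {1,…,n}) of a permutation of {1,…,n}. -/
def permWord {n : ℕ} (σ : Equiv.Perm (Fin n)) : List ℕ :=
  List.ofFn (fun i => (σ i : ℕ) + 1)

/-!
Deleting the last letter of a permutation word of length `n + 1` and standardizing the rest is
a bijection onto pairs (last value, permutation of `n`). Standardization is order-preserving, so
it keeps the left-to-right maxima and hence the saillance composition; the last letter then only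
acts on the end of the composition: if it is the maximum `n + 1` it appends a part `1`, and
otherwise it lengthens the last part by one. So the number `N(I)` of permutations with
composition `I` satisfies `N(J ++ [1]) = N(J)` and `N(J ++ [i + 1]) = n * N(J ++ [i])` for
`i > 0`, which is also the recursion of `n! / (i₁ (i₁ + i₂) ⋯ (i₁ + ⋯ + i_r))`.
-/

open Finset

def gaps (L : List ℕ) (m : ℕ) : List ℕ :=
  List.zipWith (fun a b => a - b) (L.tail ++ [m]) L

theorem SC_eq_gaps (w : List ℕ) : SC w = gaps (lrMaxPositions w) w.length := rfl

theorem gaps_append_singleton (L : List ℕ) (a m : ℕ) :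
    gaps (L ++ [a]) m = gaps L a ++ [m - a] := by
  cases L with
  | nil => rfl
  | cons x xs =>
    simp only [gaps, List.cons_append, List.tail_cons]
    rw [← List.cons_append, List.zipWith_append (by simp)]
    rfl

theorem lrMaxPositions_map {f : ℕ → ℕ} (hf : StrictMono f) (w : List ℕ) :
    lrMaxPositions (w.map f) = lrMaxPositions w := by
  have hget : ∀ j < w.length, (w.map f)[j]! = f w[j]! := fun j hj => by
    simp [getElem!_pos, hj]
  unfold lrMaxPositions
  rw [List.length_map]
  refine List.filter_congr fun i hi => decide_eq_decide.mpr ?_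
  have hi : i < w.length := List.mem_range.mp hi
  exact forall₂_congr fun j hj => by rw [hget j (hj.trans hi), hget i hi, hf.lt_iff_lt]

theorem SC_map {f : ℕ → ℕ} (hf : StrictMono f) (w : List ℕ) : SC (w.map f) = SC w := by
  rw [SC_eq_gaps, SC_eq_gaps, lrMaxPositions_map hf, List.length_map]

theorem lrMaxPositions_append_singleton (w : List ℕ) (a : ℕ) :
    lrMaxPositions (w ++ [a]) =
      lrMaxPositions w ++ if ∀ x ∈ w, x < a then [w.length] else [] := by
  have hget : ∀ j < w.length, (w ++ [a])[j]! = w[j]! := fun j hj => by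
    rw [getElem!_pos (w ++ [a]) j (by simp; omega), getElem!_pos w j hj, List.getElem_append_left]
  have hlast : (w ++ [a])[w.length]! = a := by simp [getElem!_pos]
  unfold lrMaxPositions
  rw [List.length_append, List.length_singleton, List.range_succ, List.filter_append]
  congr 1
  · refine List.filter_congr fun i hi => decide_eq_decide.mpr ?_
    have hi : i < w.length := List.mem_range.mp hi
    exact forall₂_congr fun j hj => by rw [hget j (hj.trans hi), hget i hi]
  · have hrecord :
        (∀ j < w.length, (w ++ [a])[j]! < (w ++ [a])[w.length]!) ↔ ∀ x ∈ w, x < a := by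
      rw [hlast, List.forall_mem_iff_getElem]
      exact forall₂_congr fun j hj => by rw [hget j hj, getElem!_pos w j hj]
    simp only [List.filter_singleton, hrecord]
    by_cases h : ∀ x ∈ w, x < a <;> simp [h]

theorem exists_lrMaxPositions_eq_append_singleton {w : List ℕ} (hw : w ≠ []) :
    ∃ L p, p < w.length ∧ lrMaxPositions w = L ++ [p] := by
  have hzero : 0 ∈ lrMaxPositions w := by
    simp [lrMaxPositions, List.length_pos_iff.mpr hw]
  have hne := List.ne_nil_of_mem hzero
  refine ⟨_, _, ?_, (List.dropLast_append_getLast hne).symm⟩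
  have hmem := List.getLast_mem hne
  simp only [lrMaxPositions, List.mem_filter, List.mem_range] at hmem
  exact hmem.1

theorem SC_append_singleton_of_forall_lt {w : List ℕ} {a : ℕ} (h : ∀ x ∈ w, x < a) :
    SC (w ++ [a]) = SC w ++ [1] := by
  rw [SC_eq_gaps, lrMaxPositions_append_singleton, if_pos h, gaps_append_singleton, SC_eq_gaps]
  simp

theorem SC_append_singleton_eq_append_succ_iff {w : List ℕ} {a : ℕ} (h : ¬ ∀ x ∈ w, x < a)
    (J : List ℕ) (i : ℕ) : SC (w ++ [a]) = J ++ [i + 1] ↔ 0 < i ∧ SC w = J ++ [i] := by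
  have hw : w ≠ [] := by rintro rfl; simp at h
  obtain ⟨L, p, hp, hL⟩ := exists_lrMaxPositions_eq_append_singleton hw
  rw [SC_eq_gaps, SC_eq_gaps, lrMaxPositions_append_singleton, if_neg h, List.append_nil, hL,
    gaps_append_singleton, gaps_append_singleton, List.append_singleton_inj,
    List.append_singleton_inj, List.length_append, List.length_singleton]
  constructor
  · rintro ⟨hJ, hi⟩
    exact ⟨by omega, hJ, by omega⟩
  · rintro ⟨-, hJ, hi⟩
    exact ⟨hJ, by omega⟩

def shiftAbove (k m : ℕ) : ℕ := if m ≤ k then m else m + 1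

theorem shiftAbove_strictMono (k : ℕ) : StrictMono (shiftAbove k) := by
  intro a b h
  unfold shiftAbove
  split_ifs <;> omega

def insertLast {n : ℕ} (τ : Equiv.Perm (Fin n)) (k : Fin (n + 1)) : Equiv.Perm (Fin (n + 1)) :=
  (finSuccEquivLast.trans (Equiv.optionCongr τ)).trans (finSuccEquiv' k).symm

theorem insertLast_last {n : ℕ} (τ : Equiv.Perm (Fin n)) (k : Fin (n + 1)) :
    insertLast τ k (Fin.last n) = k := by
  simp [insertLast]

theorem insertLast_castSucc {n : ℕ} (τ : Equiv.Perm (Fin n)) (k : Fin (n + 1)) (j : Fin n) :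
    insertLast τ k j.castSucc = k.succAbove (τ j) := by
  simp [insertLast]

theorem permWord_insertLast {n : ℕ} (τ : Equiv.Perm (Fin n)) (k : Fin (n + 1)) :
    permWord (insertLast τ k) = (permWord τ).map (shiftAbove k) ++ [(k : ℕ) + 1] := by
  rw [permWord, List.ofFn_succ', List.concat_eq_append, permWord, List.map_ofFn,
    insertLast_last]
  congr 2
  funext j
  simp only [Function.comp_apply, insertLast_castSucc, shiftAbove, Fin.succAbove, Fin.lt_def,
    apply_ite Fin.val, Fin.val_castSucc, Fin.val_succ]
  split_ifs <;> omega

theorem insertLast_bijective (n : ℕ) :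
    Function.Bijective fun p : Fin (n + 1) × Equiv.Perm (Fin n) => insertLast p.2 p.1 := by
  refine (Fintype.bijective_iff_injective_and_card _).mpr ⟨?_, ?_⟩
  · rintro ⟨k, τ⟩ ⟨k', τ'⟩ h
    have hk : k = k' := by simpa only [insertLast_last] using congrArg (· (Fin.last n)) h
    subst hk
    refine Prod.ext rfl (Equiv.ext fun j => Fin.succAbove_right_injective (p := k) ?_)
    simpa only [insertLast_castSucc] using congrArg (· j.castSucc) h
  · simp [Fintype.card_perm, Nat.factorial_succ]

theorem SC_permWord_insertLast_last {n : ℕ} (τ : Equiv.Perm (Fin n)) :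
    SC (permWord (insertLast τ (Fin.last n))) = SC (permWord τ) ++ [1] := by
  rw [permWord_insertLast, SC_append_singleton_of_forall_lt, SC_map (shiftAbove_strictMono _)]
  simp only [List.mem_map, permWord, List.mem_ofFn]
  rintro _ ⟨_, ⟨i, rfl⟩, rfl⟩
  have := (τ i).isLt
  simp only [shiftAbove, Fin.val_last]
  split_ifs <;> omega

theorem SC_permWord_insertLast_castSucc_eq_iff {n : ℕ} (τ : Equiv.Perm (Fin n)) (j : Fin n)
    (J : List ℕ) (i : ℕ) :
    SC (permWord (insertLast τ j.castSucc)) = J ++ [i + 1] ↔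
      0 < i ∧ SC (permWord τ) = J ++ [i] := by
  rw [permWord_insertLast, SC_append_singleton_eq_append_succ_iff,
    SC_map (shiftAbove_strictMono _)]
  have hj := j.isLt
  simp only [List.mem_map, permWord, List.mem_ofFn, not_forall]
  refine ⟨n + 1, ⟨n, ⟨τ.symm ⟨n - 1, by omega⟩, by simp; omega⟩, ?_⟩, by simp⟩
  simp only [shiftAbove, Fin.val_castSucc]
  split_ifs <;> omega

def scCount (n : ℕ) (I : List ℕ) : ℕ := #{σ : Equiv.Perm (Fin n) | SC (permWord σ) = I}

theorem scCount_succ (n : ℕ) (I : List ℕ) :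
    scCount (n + 1) I =
      ∑ k, #{τ : Equiv.Perm (Fin n) | SC (permWord (insertLast τ k)) = I} := by
  simp only [scCount, card_filter]
  rw [← (insertLast_bijective n).sum_comp, Fintype.sum_prod_type]

theorem scCount_succ_append_one (n : ℕ) (J : List ℕ) :
    scCount (n + 1) (J ++ [1]) = scCount n J := by
  have hcastSucc (j : Fin n) (τ : Equiv.Perm (Fin n)) :
      SC (permWord (insertLast τ j.castSucc)) ≠ J ++ [1] := fun h =>
    lt_irrefl 0 ((SC_permWord_insertLast_castSucc_eq_iff τ j J 0).mp h).1
  rw [scCount_succ, Fin.sum_univ_castSucc]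
  simp [hcastSucc, SC_permWord_insertLast_last, scCount]

theorem scCount_succ_append_succ (n : ℕ) (J : List ℕ) {i : ℕ} (hi : 0 < i) :
    scCount (n + 1) (J ++ [i + 1]) = n * scCount n (J ++ [i]) := by
  rw [scCount_succ, Fin.sum_univ_castSucc]
  simp [SC_permWord_insertLast_castSucc_eq_iff, hi, hi.ne', SC_permWord_insertLast_last, scCount]

def prefixSumProd (I : List ℕ) : ℕ := ∏ k ∈ range I.length, (I.take (k + 1)).sum

theorem prefixSumProd_append_singleton (J : List ℕ) (i : ℕ) :
    prefixSumProd (J ++ [i]) = prefixSumProd J * (J.sum + i) := by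
  rw [prefixSumProd, List.length_append, List.length_singleton, prod_range_succ,
    List.take_of_length_le (by simp), List.sum_append, List.sum_singleton]
  congr 1
  refine prod_congr rfl fun k hk => ?_
  rw [List.take_append_of_le_length (by simp at hk; omega)]

theorem scCount_mul_prefixSumProd {n : ℕ} {I : List ℕ} (hpos : ∀ i ∈ I, 0 < i)
    (hsum : I.sum = n) :
    scCount n I * prefixSumProd I = n.factorial := by
  induction n generalizing I with
  | zero =>
    obtain rfl : I = [] := List.eq_nil_iff_forall_not_mem.mpr fun i hi =>
      (hpos i hi).ne' (List.sum_eq_zero_iff.mp hsum i hi)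
    rfl
  | succ n ih =>
    obtain rfl | ⟨J, i, rfl⟩ := I.eq_nil_or_concat'
    · simp at hsum
    have hJ : ∀ j ∈ J, 0 < j := fun j hj => hpos j (by simp [hj])
    have hi : 0 < i := hpos i (by simp)
    rw [List.sum_append, List.sum_singleton] at hsum
    rw [prefixSumProd_append_singleton, hsum]
    obtain _ | _ | i := i
    · exact absurd hi (lt_irrefl 0)
    · rw [scCount_succ_append_one, ← mul_assoc, ih hJ (by omega), Nat.factorial_succ, mul_comm]
    · have hJi :=
        ih (I := J ++ [i + 1]) (List.forall_mem_append.mpr ⟨hJ, by simp⟩) (by simp; omega)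
      rw [prefixSumProd_append_singleton, show J.sum + (i + 1) = n by omega] at hJi
      rw [scCount_succ_append_succ n J i.succ_pos, Nat.factorial_succ, ← hJi]
      ring

/-- The number of permutations of {1,…,n} with saillance composition
`I = (i₁,…,i_r)` is `n! / (i₁(i₁+i₂)⋯(i₁+⋯+i_r))`. -/
theorem stmt2 (n : ℕ) (I : List ℕ) (hpos : ∀ i ∈ I, 0 < i) (hsum : I.sum = n) :
    ((Finset.univ.filter (fun σ : Equiv.Perm (Fin n) => SC (permWord σ) = I)).card : ℚ)
      = (n.factorial : ℚ) / ∏ k ∈ Finset.range I.length, ((I.take (k + 1)).sum : ℚ) := by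
  have h := scCount_mul_prefixSumProd hpos hsum
  have hprod : prefixSumProd I ≠ 0 := right_ne_zero_of_mul (h ▸ n.factorial_ne_zero)
  rw [eq_div_iff (by exact_mod_cast hprod)]
  exact_mod_cast h
end

section
/- For a composition I = (i₁,...,i_r) of n, the generating polynomial of the statistic (binomial(n,2) − inv(σ)) over all permutations σ of n with saillance composition I equals q^{maj(I)} · [n]_q! / ([i₁]_q [i₁+i₂]_q ⋯ [i₁+⋯+i_r]_q), where maj(I) is the sum of the partial sums i₁, i₁+i₂, ..., i₁+⋯+i_{r-1}. -/
open scoped Classical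

/-- The `q`-integer `[k]_q = 1 + q + ⋯ + q^{k-1}` as a polynomial in `q = X`. -/
noncomputable def qInt (k : ℕ) : Polynomial ℤ := ∑ i ∈ Finset.range k, Polynomial.X ^ i

/-- The `q`-factorial `[n]_q! = [1]_q [2]_q ⋯ [n]_q`. -/
noncomputable def qFact (n : ℕ) : Polynomial ℤ := ∏ k ∈ Finset.range n, qInt (k + 1)

/-- The major index `maj(I) = i₁ + (i₁+i₂) + ⋯ + (i₁+⋯+i_{r-1})` of a composition. -/
def majC (I : List ℕ) : ℕ := ∑ k ∈ Finset.range (I.length - 1), (I.take (k + 1)).sum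

/-- The number of inversions of a permutation. -/
def invPerm {n : ℕ} (σ : Equiv.Perm (Fin n)) : ℕ :=
  (Finset.univ.filter (fun p : Fin n × Fin n => p.1 < p.2 ∧ σ p.2 < σ p.1)).card

/-! The Lehmer code `c_j = #{i < j | σ i < σ j} ∈ {0, …, j}` is a bijection from the
permutations of `[n]` onto `∏_j {0, …, j}`, with `∑_j c_j = C(n,2) − inv σ`. Position `j` is a
left-to-right maximum exactly when `c_j = j`, and `SC σ = I` says that the left-to-right maxima
sit exactly at the block starts `0, i₁, i₁ + i₂, …`. Hence the generating polynomial of the fibre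
is the product over `j < n` of `q^j` at the block starts and of `[j]_q` elsewhere, that is
`q^{maj I}` times the `[j]_q` over the non-starts; the block ends `i₁, i₁ + i₂, …, n` supply
exactly the missing factors of `[n]_q!`. -/

open Finset Polynomial

section LehmerCode

variable {n : ℕ}

def coinvCount (σ : Equiv.Perm (Fin n)) (j : Fin n) : ℕ := #{i ∈ Iio j | σ i < σ j}

def IsRecord (σ : Equiv.Perm (Fin n)) (j : Fin n) : Prop := ∀ i < j, σ i < σ j

lemma coinvCount_le (σ : Equiv.Perm (Fin n)) (j : Fin n) : coinvCount σ j ≤ j :=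
  (card_filter_le _ _).trans (Fin.card_Iio j).le

lemma isRecord_iff_coinvCount_eq (σ : Equiv.Perm (Fin n)) (j : Fin n) :
    IsRecord σ j ↔ coinvCount σ j = j := by
  rw [coinvCount, ← Fin.card_Iio j, card_filter_eq_iff]
  simp [IsRecord]

lemma coinvCount_eq_card_values (σ : Equiv.Perm (Fin n)) (j : Fin n) :
    coinvCount σ j = #{v ∈ Iio (σ j) | σ.symm v < j} :=
  card_nbij' σ σ.symm (fun i => by simp +contextual) (fun v => by simp +contextual)
    (fun i _ => by simp) (fun v _ => by simp)

lemma coinvCount_lt_coinvCount {σ τ : Equiv.Perm (Fin n)} {j : Fin n}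
    (hagree : ∀ i, j < i → σ i = τ i) (hlt : σ j < τ j) :
    coinvCount σ j < coinvCount τ j := by
  -- Counted by values, the set for `σ` is a proper subset of the set for `τ`, missing `σ j`.
  have hbefore : ∀ v, v ≠ τ j → σ.symm v ≤ j → τ.symm v < j := by
    intro v hv hσv
    by_contra! h
    rcases h.eq_or_lt with h | h
    · exact hv (by rw [h, Equiv.apply_symm_apply])
    · have : σ (τ.symm v) = v := by rw [hagree _ h, Equiv.apply_symm_apply]
      rw [← this, Equiv.symm_apply_apply] at hσv
      exact absurd h (not_lt.2 hσv)
  rw [coinvCount_eq_card_values, coinvCount_eq_card_values]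
  refine card_lt_card ((ssubset_iff_of_subset ?_).2 ⟨σ j, ?_, ?_⟩)
  · intro v
    simp only [mem_filter, mem_Iio]
    exact fun ⟨hv, hσv⟩ => ⟨hv.trans hlt, hbefore v (hv.trans hlt).ne hσv.le⟩
  · simpa [hlt] using hbefore (σ j) hlt.ne (by simp)
  · simp

def lehmerCode (σ : Equiv.Perm (Fin n)) (j : Fin n) : Fin (j + 1) :=
  ⟨coinvCount σ j, Nat.lt_succ_of_le (coinvCount_le σ j)⟩

lemma lehmerCode_injective : Function.Injective (lehmerCode (n := n)) := by
  intro σ τ h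
  have hcode : ∀ j, coinvCount σ j = coinvCount τ j := fun j => congrArg Fin.val (congrFun h j)
  by_contra hne
  have hD : ({j | σ j ≠ τ j} : Finset (Fin n)).Nonempty := by
    obtain ⟨j, hj⟩ := not_forall.1 (mt Equiv.ext hne)
    exact ⟨j, by simpa using hj⟩
  set j := ({j | σ j ≠ τ j} : Finset (Fin n)).max' hD
  have hagree : ∀ i, j < i → σ i = τ i := fun i hi =>
    by_contra fun h => hi.not_ge (le_max' _ _ (by simpa using h))
  have hj : σ j ≠ τ j := by simpa using max'_mem _ hD
  rcases hj.lt_or_gt with hlt | hgt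
  · exact (coinvCount_lt_coinvCount hagree hlt).ne (hcode j)
  · exact (coinvCount_lt_coinvCount (fun i hi => (hagree i hi).symm) hgt).ne' (hcode j)

lemma lehmerCode_bijective : Function.Bijective (lehmerCode (n := n)) := by
  rw [Fintype.bijective_iff_injective_and_card, Fintype.card_perm, Fintype.card_pi]
  refine ⟨lehmerCode_injective, ?_⟩
  simp only [Fintype.card_fin]
  rw [Fin.prod_univ_eq_prod_range (· + 1) n, prod_range_add_one_eq_factorial]

lemma invPerm_add_sum_coinvCount (σ : Equiv.Perm (Fin n)) :
    invPerm σ + ∑ j, coinvCount σ j = n.choose 2 := by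
  have hinv : invPerm σ = ∑ j, #{i ∈ Iio j | σ j < σ i} := by
    simp only [invPerm, card_filter, Fintype.sum_prod_type]
    rw [sum_comm]
    simp [← filter_gt_eq_Iio, filter_filter, card_filter, ite_and]
  have hsplit : ∀ j, #{i ∈ Iio j | σ j < σ i} + coinvCount σ j = j := by
    intro j
    rw [coinvCount, ← Fin.card_Iio j,
      ← card_filter_add_card_filter_not (s := Iio j) (fun i => σ j < σ i)]
    congr 2
    refine filter_congr fun i hi => ?_
    rw [not_lt, le_iff_lt_or_eq, or_iff_left (σ.injective.ne (mem_Iio.1 hi).ne)]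
  rw [hinv, ← sum_add_distrib, Fintype.sum_congr _ _ hsplit, Fin.sum_univ_eq_sum_range (·) n,
    sum_range_id, Nat.choose_two_right]

end LehmerCode

def blockStarts (I : List ℕ) : List ℕ := (List.range I.length).map fun k => (I.take k).sum

def gapsTo (n : ℕ) (P : List ℕ) : List ℕ := List.zipWith (fun a b => a - b) (P.tail ++ [n]) P

lemma SC_eq_gapsTo (w : List ℕ) : SC w = gapsTo w.length (lrMaxPositions w) := rfl

lemma gapsTo_cons (n a : ℕ) (P : List ℕ) :
    gapsTo n (a :: P) = (P.headD n - a) :: gapsTo n P := by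
  cases P <;> rfl

lemma gapsTo_map_add (c n : ℕ) (P : List ℕ) : gapsTo (c + n) (P.map (c + ·)) = gapsTo n P := by
  induction P with
  | nil => rfl
  | cons a P ih => cases P <;> simp_all [gapsTo_cons, Nat.add_sub_add_left]

lemma blockStarts_cons (i : ℕ) (J : List ℕ) :
    blockStarts (i :: J) = 0 :: (blockStarts J).map (i + ·) := by
  simp [blockStarts, List.range_succ_eq_map, List.map_map, Function.comp_def]

lemma headD_blockStarts (I : List ℕ) : (blockStarts I).headD I.sum = 0 := by
  cases I with
  | nil => rfl
  | cons i J => simp [blockStarts_cons]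

lemma gapsTo_blockStarts (I : List ℕ) : gapsTo I.sum (blockStarts I) = I := by
  induction I with
  | nil => rfl
  | cons i J ih =>
    rw [blockStarts_cons, List.sum_cons, gapsTo_cons, gapsTo_map_add, ih]
    simpa using headD_blockStarts J

lemma map_add_blockStarts_gapsTo_cons {n : ℕ} (a : ℕ) (L : List ℕ)
    (hsorted : (a :: L).Pairwise (· < ·)) (hlt : ∀ x ∈ a :: L, x < n) :
    (blockStarts (gapsTo n (a :: L))).map (a + ·) = a :: L := by
  induction L generalizing a with
  | nil => simp [gapsTo, blockStarts]
  | cons b L ih =>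
    have hab : a < b := List.rel_of_pairwise_cons hsorted List.mem_cons_self
    rw [gapsTo_cons, blockStarts_cons, List.map_cons, List.map_map, List.headD_cons]
    have hshift : (a + ·) ∘ (b - a + ·) = (b + ·) := by funext x; simp; omega
    rw [hshift, ih b hsorted.of_cons fun x hx => hlt x (List.mem_cons_of_mem a hx)]
    simp

lemma blockStarts_gapsTo {n : ℕ} {P : List ℕ} (hsorted : P.Pairwise (· < ·))
    (hlt : ∀ x ∈ P, x < n) (hzero : 0 < n → 0 ∈ P) : blockStarts (gapsTo n P) = P := by
  cases P with
  | nil => rfl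
  | cons a L =>
    obtain rfl : a = 0 := by
      have hn : 0 < n := (Nat.zero_le a).trans_lt (hlt a List.mem_cons_self)
      rcases List.mem_cons.1 (hzero hn) with h | h
      · exact h.symm
      · exact absurd (List.rel_of_pairwise_cons hsorted h) (Nat.not_lt_zero a)
    simpa using map_add_blockStarts_gapsTo_cons 0 L hsorted hlt

lemma blockStarts_pairwise {I : List ℕ} (hpos : ∀ i ∈ I, 0 < i) :
    (blockStarts I).Pairwise (· < ·) := by
  induction I with
  | nil => exact List.Pairwise.nil
  | cons i J ih =>
    rw [blockStarts_cons, List.pairwise_cons, List.pairwise_map]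
    refine ⟨fun x hx => ?_, (ih fun j hj => hpos j (List.mem_cons_of_mem i hj)).imp (by omega)⟩
    obtain ⟨y, -, rfl⟩ := List.mem_map.1 hx
    have := hpos i List.mem_cons_self
    omega

lemma lt_sum_of_mem_blockStarts {I : List ℕ} (hpos : ∀ i ∈ I, 0 < i) {x : ℕ}
    (hx : x ∈ blockStarts I) : x < I.sum := by
  induction I generalizing x with
  | nil => simp [blockStarts] at hx
  | cons i J ih =>
    have := hpos i List.mem_cons_self
    rw [blockStarts_cons, List.mem_cons, List.mem_map] at hx
    rcases hx with rfl | ⟨y, hy, rfl⟩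
    · rw [List.sum_cons]
      omega
    · rw [List.sum_cons]
      exact Nat.add_lt_add_left (ih (fun j hj => hpos j (List.mem_cons_of_mem i hj)) hy) i

lemma lrMaxPositions_pairwise (w : List ℕ) : (lrMaxPositions w).Pairwise (· < ·) :=
  List.pairwise_lt_range.filter _

lemma mem_lrMaxPositions {w : List ℕ} {x : ℕ} :
    x ∈ lrMaxPositions w ↔ x < w.length ∧ ∀ j < x, w[j]! < w[x]! := by
  simp [lrMaxPositions]

lemma SC_eq_iff {w I : List ℕ} (hsum : I.sum = w.length) :
    SC w = I ↔ lrMaxPositions w = blockStarts I := by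
  constructor
  · rintro rfl
    refine (blockStarts_gapsTo (lrMaxPositions_pairwise w) (fun x hx => ?_) fun hw => ?_).symm
    · exact (mem_lrMaxPositions.1 hx).1
    · exact mem_lrMaxPositions.2 ⟨hw, by simp⟩
  · intro h
    rw [SC_eq_gapsTo, h, ← hsum, gapsTo_blockStarts]

section Records

variable {n : ℕ}

lemma getElem!_permWord (σ : Equiv.Perm (Fin n)) {j : ℕ} (hj : j < n) :
    (permWord σ)[j]! = σ ⟨j, hj⟩ + 1 := by
  simp [permWord, hj]

lemma mem_lrMaxPositions_permWord (σ : Equiv.Perm (Fin n)) {x : ℕ} :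
    x ∈ lrMaxPositions (permWord σ) ↔ ∃ hx : x < n, IsRecord σ ⟨x, hx⟩ := by
  rw [mem_lrMaxPositions]
  simp only [IsRecord, show (permWord σ).length = n by simp [permWord]]
  constructor
  · rintro ⟨hx, h⟩
    refine ⟨hx, fun i hi => ?_⟩
    have := h i hi
    rwa [getElem!_permWord σ i.isLt, getElem!_permWord σ hx, add_lt_add_iff_right] at this
  · rintro ⟨hx, h⟩
    refine ⟨hx, fun j hj => ?_⟩
    rw [getElem!_permWord σ (hj.trans hx), getElem!_permWord σ hx, add_lt_add_iff_right]
    exact h ⟨j, hj.trans hx⟩ hj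

lemma SC_permWord_eq_iff (σ : Equiv.Perm (Fin n)) {I : List ℕ} (hpos : ∀ i ∈ I, 0 < i)
    (hsum : I.sum = n) :
    SC (permWord σ) = I ↔ ∀ j : Fin n, IsRecord σ j ↔ (j : ℕ) ∈ blockStarts I := by
  rw [SC_eq_iff (by simp [permWord, hsum])]
  constructor
  · intro h j
    rw [← h, mem_lrMaxPositions_permWord]
    simp
  · intro h
    refine (lrMaxPositions_pairwise _).eq_of_mem_iff (blockStarts_pairwise hpos) fun x => ?_
    rw [mem_lrMaxPositions_permWord]
    constructor
    · rintro ⟨hx, hrec⟩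
      exact (h ⟨x, hx⟩).1 hrec
    · intro hx
      have hxn : x < n := hsum ▸ lt_sum_of_mem_blockStarts hpos hx
      exact ⟨hxn, (h ⟨x, hxn⟩).2 hx⟩

lemma sum_X_pow_filter_val_eq_iff (j : ℕ) (p : Prop) [Decidable p] :
    ∑ x ∈ univ.filter (fun x : Fin (j + 1) => x.val = j ↔ p), (X : ℤ[X]) ^ x.val =
      if p then X ^ j else qInt j := by
  rw [sum_filter, Fin.sum_univ_castSucc]
  have hne (x : Fin j) : x.val ≠ j := x.isLt.ne
  by_cases hp : p <;> simp [hp, hne, qInt, Fin.sum_univ_eq_sum_range (fun i => (X : ℤ[X]) ^ i)]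

lemma sum_X_pow_coinv_filter_records (p : Fin n → Prop) [DecidablePred p] :
    ∑ σ : Equiv.Perm (Fin n) with ∀ j, IsRecord σ j ↔ p j, (X : ℤ[X]) ^ (∑ j, coinvCount σ j)
      = ∏ j : Fin n, if p j then X ^ (j : ℕ) else qInt j := by
  let t : (j : Fin n) → Finset (Fin (j + 1)) := fun j => univ.filter fun x => x.val = j ↔ p j
  calc _ = ∑ c ∈ Fintype.piFinset t, ∏ j, (X : ℤ[X]) ^ (c j).val := by
        refine sum_equiv (Equiv.ofBijective _ lehmerCode_bijective) (fun σ => ?_) (fun σ _ => ?_)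
        · simp [t, Fintype.mem_piFinset, isRecord_iff_coinvCount_eq, lehmerCode]
        · simp [lehmerCode, prod_pow_eq_pow_sum]
    _ = ∏ j, ∑ x ∈ t j, (X : ℤ[X]) ^ x.val :=
        (prod_univ_sum t fun j x => (X : ℤ[X]) ^ x.val).symm
    _ = _ := Fintype.prod_congr _ _ fun j => sum_X_pow_filter_val_eq_iff j (p j)

end Records

lemma qFact_eq_prod_erase_zero (n : ℕ) : qFact n = ∏ j ∈ (range (n + 1)).erase 0, qInt j := by
  rw [range_add_one', erase_insert (by simp), prod_map, qFact]
  rfl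

-- Used with `B` the block starts and `E` the block ends of a composition of `n`.
lemma prod_qInt_sdiff_mul_prod_qInt {n : ℕ} {B E : Finset ℕ} (hB : B ⊆ range n) (h0 : 0 ∉ E)
    (hBE : insert n B = insert 0 E) :
    (∏ j ∈ range n \ B, qInt j) * ∏ j ∈ E, qInt j = qFact n := by
  have hsdiff : range n \ B = (range (n + 1)).erase 0 \ E := by
    rw [erase_sdiff_comm, ← sdiff_insert, ← hBE, range_add_one, insert_sdiff_insert,
      sdiff_insert_of_notMem (by simp)]
  have hE : E ⊆ (range (n + 1)).erase 0 := by
    intro x hx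
    have hxB : x ∈ insert n B := hBE ▸ mem_insert_of_mem hx
    rw [range_add_one]
    exact mem_erase.2 ⟨ne_of_mem_of_not_mem hx h0, insert_subset_insert n hB hxB⟩
  rw [hsdiff, prod_sdiff hE, qFact_eq_prod_erase_zero]

lemma strictMonoOn_sum_take {I : List ℕ} (hpos : ∀ i ∈ I, 0 < i) :
    StrictMonoOn (fun k => (I.take k).sum) (Set.Iic I.length) := by
  intro k _ l hl hkl
  obtain ⟨d, rfl⟩ := Nat.exists_eq_add_of_lt hkl
  show (I.take k).sum < (I.take (k + d + 1)).sum
  rw [add_assoc, List.take_add, List.sum_append, lt_add_iff_pos_right]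
  refine List.sum_pos _ (fun x hx => hpos x (List.mem_of_mem_drop (List.mem_of_mem_take hx))) ?_
  rw [Set.mem_Iic] at hl
  exact List.ne_nil_of_length_pos (by simp only [List.length_take, List.length_drop]; omega)

lemma blockStarts_toFinset_subset_range {I : List ℕ} (hpos : ∀ i ∈ I, 0 < i) :
    (blockStarts I).toFinset ⊆ range I.sum := fun _ hx =>
  mem_range.2 (lt_sum_of_mem_blockStarts hpos (List.mem_toFinset.1 hx))

lemma sum_blockStarts (I : List ℕ) : (blockStarts I).sum = majC I := by
  rw [blockStarts, ← List.sum_toFinset _ List.nodup_range, List.toFinset_range, majC]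
  cases I.length with
  | zero => rfl
  | succ m => simp [sum_range_succ']

lemma prod_ite_blockStarts {I : List ℕ} (hpos : ∀ i ∈ I, 0 < i) :
    ∏ j ∈ range I.sum, (if j ∈ blockStarts I then (X : ℤ[X]) ^ j else qInt j) =
      X ^ majC I * ∏ j ∈ range I.sum \ (blockStarts I).toFinset, qInt j := by
  have hsub := blockStarts_toFinset_subset_range hpos
  have hfilter : (range I.sum).filter (· ∈ blockStarts I) = (blockStarts I).toFinset := by
    ext x
    rw [mem_filter, List.mem_toFinset]
    exact ⟨And.right, fun hx => ⟨hsub (List.mem_toFinset.2 hx), hx⟩⟩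
  have hfilterNot : (range I.sum).filter (· ∉ blockStarts I) =
      range I.sum \ (blockStarts I).toFinset := by
    ext x
    simp
  rw [prod_ite, hfilter, hfilterNot, prod_pow_eq_pow_sum, ← sum_blockStarts,
    List.sum_toFinset _ (blockStarts_pairwise hpos).nodup, List.map_id']

lemma prod_qInt_sdiff_blockStarts_mul_prod_qInt {I : List ℕ} (hpos : ∀ i ∈ I, 0 < i) :
    (∏ j ∈ range I.sum \ (blockStarts I).toFinset, qInt j) *
      ∏ k ∈ range I.length, qInt ((I.take (k + 1)).sum) = qFact I.sum := by
  have hmono := strictMonoOn_sum_take hpos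
  have hinj : Set.InjOn (fun k => (I.take (k + 1)).sum) (range I.length) := fun k hk l hl h =>
    Nat.succ_injective (hmono.injOn (by simpa using hk) (by simpa using hl) h)
  rw [← prod_image hinj]
  refine prod_qInt_sdiff_mul_prod_qInt (blockStarts_toFinset_subset_range hpos) ?_ ?_
  · simp only [mem_image, mem_range, not_exists, not_and]
    intro k hk
    simpa using (hmono (by simp) (by simpa using hk) k.succ_pos).ne'
  · have hstarts :
        (blockStarts I).toFinset = (range I.length).image fun k => (I.take k).sum := by
      ext
      simp [blockStarts]
    rw [hstarts, show I.sum = (I.take I.length).sum by simp,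
      ← image_insert (f := fun k => (I.take k).sum), ← range_add_one, range_add_one', map_eq_image,
      image_insert, image_image]
    rfl

/-- The generating polynomial of `C(n,2) − inv(σ)` over permutations with
saillance composition `I` equals
`q^{maj(I)} [n]_q! / ([i₁]_q [i₁+i₂]_q ⋯ [i₁+⋯+i_r]_q)`
(stated in denominator-cleared form). -/
theorem stmt3 (n : ℕ) (I : List ℕ) (hpos : ∀ i ∈ I, 0 < i) (hsum : I.sum = n) :
    (∑ σ ∈ Finset.univ.filter (fun σ : Equiv.Perm (Fin n) => SC (permWord σ) = I),
        (Polynomial.X : Polynomial ℤ) ^ (n.choose 2 - invPerm σ)) *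
      ∏ k ∈ Finset.range I.length, qInt ((I.take (k + 1)).sum)
    = Polynomial.X ^ majC I * qFact n := by
  subst hsum
  have hfiber : ∑ σ ∈ univ.filter (fun σ : Equiv.Perm (Fin I.sum) => SC (permWord σ) = I),
      (X : ℤ[X]) ^ (I.sum.choose 2 - invPerm σ) =
        ∏ j ∈ range I.sum, if j ∈ blockStarts I then X ^ j else qInt j := by
    rw [← Fin.prod_univ_eq_prod_range (fun j => if j ∈ blockStarts I then X ^ j else qInt j),
      ← sum_X_pow_coinv_filter_records]
    refine sum_congr (filter_congr fun σ _ => SC_permWord_eq_iff σ hpos rfl) fun σ _ => ?_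
    rw [← invPerm_add_sum_coinvCount σ, Nat.add_sub_cancel_left]
  rw [hfiber, prod_ite_blockStarts hpos, mul_assoc,
    prod_qInt_sdiff_blockStarts_mul_prod_qInt hpos]
end

section
/- For permutations σ of m and τ of p, and any permutation ν occurring in the shifted shuffle of σ and τ, the length q of the saillance composition of ν satisfies ℓ(SC(τ)) ≤ q ≤ ℓ(SC(τ)) + ℓ(SC(σ)), and the first q − ℓ(SC(τ)) saillance positions of ν come from saillances of σ while the remaining ℓ(SC(τ)) come from the shifted saillances of τ. -/
/-!
Every letter of `τ` shifted by `m` exceeds every letter of `σ`. Hence the first letter of `ν`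
coming from `τ` is a saillance of `ν`, and after it no letter of `σ` can be one. Before it, the
saillances of `ν` are those of a prefix of `σ`, that is a prefix of the saillances of `σ`; from it
on, they are the saillances of the shifted word `τ`. Both halves become straightforward inductions
once saillance values are computed by a left-to-right scan that carries the current maximum.
-/

open scoped Classical

/-- `w` occurs in the shifted shuffle of `u` (a word on {1,…,p}) and `v`
(whose letters get shifted by `p`): the subword of letters ≤ p is `u` and the
subword of letters > p is `v` shifted by `p`. -/
def shiftedShuffleMem (p : ℕ) (u v w : List ℕ) : Prop :=
  w.filter (fun x => decide (x ≤ p)) = u ∧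
    w.filter (fun x => decide (p < x)) = v.map (· + p)

/-- The values of a word at its left-to-right maxima positions. -/
def lrMaxValues (w : List ℕ) : List ℕ := (lrMaxPositions w).map (fun i => w[i]!)

/-- `c` stands for the maximum of the letters already read. -/
def recordsAbove (c : ℕ) : List ℕ → List ℕ
  | [] => []
  | a :: t => if c < a then a :: recordsAbove a t else recordsAbove c t

def lrMaxPositionsAbove (c : ℕ) (w : List ℕ) : List ℕ :=
  (List.range w.length).filter (fun i => decide ((∀ j < i, w[j]! < w[i]!) ∧ c < w[i]!))

lemma lrMaxPositionsAbove_cons (c b : ℕ) (t : List ℕ) :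
    lrMaxPositionsAbove c (b :: t) =
      (if c < b then [0] else []) ++ (lrMaxPositionsAbove (max c b) t).map (· + 1) := by
  have hsucc : ∀ i, ((∀ j < i + 1, (b :: t)[j]! < (b :: t)[i + 1]!) ∧ c < (b :: t)[i + 1]!) ↔
      ((∀ j < i, t[j]! < t[i]!) ∧ max c b < t[i]!) := by
    intro i
    simp only [Nat.forall_lt_succ_left, List.getElem!_cons_succ, List.getElem!_cons_zero,
      max_lt_iff]
    tauto
  have htail : (List.range t.length).filter
      ((fun i => decide ((∀ j < i, (b :: t)[j]! < (b :: t)[i]!) ∧ c < (b :: t)[i]!)) ∘ Nat.succ) =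
        lrMaxPositionsAbove (max c b) t :=
    List.filter_congr fun i _ => by simp only [Function.comp_apply, Nat.succ_eq_add_one, hsucc]
  rw [lrMaxPositionsAbove, List.length_cons, List.range_succ_eq_map, List.filter_cons,
    List.filter_map, htail]
  by_cases hcb : c < b <;> simp [hcb]

lemma map_getElem!_lrMaxPositionsAbove (c : ℕ) (w : List ℕ) :
    (lrMaxPositionsAbove c w).map (w[·]!) = recordsAbove c w := by
  induction w generalizing c with
  | nil => simp [lrMaxPositionsAbove, recordsAbove]
  | cons b t ih =>
    rcases lt_or_ge c b with hcb | hbc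
    · simp [lrMaxPositionsAbove_cons, recordsAbove, hcb, hcb.le, Function.comp_def, ← ih]
    · simp [lrMaxPositionsAbove_cons, recordsAbove, hbc, hbc.not_gt, Function.comp_def, ← ih]

lemma lrMaxValues_eq_recordsAbove_zero {w : List ℕ} (hw : ∀ a ∈ w, 0 < a) :
    lrMaxValues w = recordsAbove 0 w := by
  have hpos : lrMaxPositions w = lrMaxPositionsAbove 0 w :=
    List.filter_congr fun i hi => by
      have hi : i < w.length := List.mem_range.mp hi
      simp [getElem!_pos w i hi, hw _ (List.getElem_mem hi)]
  rw [lrMaxValues, hpos, map_getElem!_lrMaxPositionsAbove]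

lemma recordsAbove_filter_lt {m c : ℕ} (hmc : m ≤ c) (w : List ℕ) :
    recordsAbove c (w.filter (m < ·)) = recordsAbove c w := by
  induction w generalizing c with
  | nil => rfl
  | cons a t ih =>
    by_cases hma : m < a
    · by_cases hca : c < a
      · simp [recordsAbove, hma, hca, ih hma.le]
      · simp [recordsAbove, hma, hca, ih hmc]
    · simp [recordsAbove, hma, show ¬c < a by omega, ih hmc]

lemma recordsAbove_map_add (c m : ℕ) (v : List ℕ) :
    recordsAbove (c + m) (v.map (· + m)) = (recordsAbove c v).map (· + m) := by
  induction v generalizing c with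
  | nil => rfl
  | cons a t ih => by_cases hca : c < a <;> simp [recordsAbove, hca, ih]

lemma exists_recordsAbove_eq_take_append {c m : ℕ} (hcm : c ≤ m) (w : List ℕ) :
    ∃ t, recordsAbove c w =
      (recordsAbove c (w.filter (· ≤ m))).take t ++ recordsAbove m (w.filter (m < ·)) := by
  induction w generalizing c with
  | nil => exact ⟨0, rfl⟩
  | cons a w ih =>
    by_cases ham : a ≤ m
    · by_cases hca : c < a
      · obtain ⟨t, ht⟩ := ih ham
        exact ⟨t + 1, by simp [recordsAbove, ham, hca, ht]⟩
      · obtain ⟨t, ht⟩ := ih hcm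
        exact ⟨t, by simp [recordsAbove, ham, hca, ht]⟩
    · refine ⟨0, ?_⟩
      simp [recordsAbove, ham, show c < a by omega, show m < a by omega,
        recordsAbove_filter_lt (show m ≤ a by omega)]

lemma List.bounds_of_eq_take_append {α : Type*} {A B L : List α} {t : ℕ}
    (h : L = A.take t ++ B) :
    B.length ≤ L.length ∧ L.length ≤ B.length + A.length ∧
      L = A.take (L.length - B.length) ++ B := by
  have hlen : L.length = min t A.length + B.length := by simp [h]
  refine ⟨by omega, by omega, ?_⟩
  conv_lhs => rw [h]
  rw [List.append_left_inj, List.take_eq_take_iff]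
  omega

lemma SC_length (w : List ℕ) : (SC w).length = (lrMaxValues w).length := by
  simp only [SC, lrMaxValues, List.length_zipWith, List.length_map, List.length_append,
    List.length_tail, List.length_singleton]
  omega

lemma pos_of_mem_permWord {n : ℕ} (σ : Equiv.Perm (Fin n)) : ∀ a ∈ permWord σ, 0 < a := by
  simp [permWord, List.mem_ofFn]

/-- For `ν` in the shifted shuffle of `σ ∈ S_m` and `τ ∈ S_p`, the length `q`
of `SC(ν)` satisfies `ℓ(SC(τ)) ≤ q ≤ ℓ(SC(τ)) + ℓ(SC(σ))`, and the saillances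
of `ν` are a prefix (of length `q − ℓ(SC(τ))`) of the saillances of `σ`
followed by all the shifted saillances of `τ`. -/
theorem stmt18 (m p : ℕ) (σ : Equiv.Perm (Fin m)) (τ : Equiv.Perm (Fin p))
    (ν : Equiv.Perm (Fin (m + p)))
    (hν : shiftedShuffleMem m (permWord σ) (permWord τ) (permWord ν)) :
    (SC (permWord τ)).length ≤ (SC (permWord ν)).length ∧
      (SC (permWord ν)).length ≤ (SC (permWord τ)).length + (SC (permWord σ)).length ∧
      lrMaxValues (permWord ν)
        = (lrMaxValues (permWord σ)).take
            ((SC (permWord ν)).length - (SC (permWord τ)).length)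
          ++ (lrMaxValues (permWord τ)).map (· + m) := by
  obtain ⟨hlow, hhigh⟩ := hν
  obtain ⟨t, ht⟩ := exists_recordsAbove_eq_take_append (Nat.zero_le m) (permWord ν)
  have hsplit : lrMaxValues (permWord ν) =
      (lrMaxValues (permWord σ)).take t ++ (lrMaxValues (permWord τ)).map (· + m) := by
    simp only [lrMaxValues_eq_recordsAbove_zero (pos_of_mem_permWord _), ht, hlow, hhigh]
    rw [← recordsAbove_map_add, zero_add]
  simpa only [SC_length, List.length_map] using List.bounds_of_eq_take_append hsplit
end

section
/- For each n ≥ 1, the sum over all compositions I of n of the product n!/(i₁(i₁+i₂)⋯(i₁+⋯+i_r)) equals n!; equivalently, Σ_{I ⊨ n} 1/(i₁(i₁+i₂)⋯(i₁+⋯+i_r)) = 1. -/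
open Finset List

noncomputable def Sc (n : ℕ) : ℚ :=
  ∑ I : Composition n, 1 / ∏ k ∈ Finset.range I.length, ((I.blocks.take (k + 1)).sum : ℚ)

lemma comp_blocks_ne_nil {n : ℕ} (hn : 0 < n) (I : Composition n) : I.blocks ≠ [] := by
  intro h
  have := I.blocks_sum
  rw [h] at this
  simp at this
  omega

lemma comp_sum_dropLast {n : ℕ} (hn : 0 < n) (I : Composition n) :
    I.blocks.dropLast.sum + I.blocks.getLast (comp_blocks_ne_nil hn I) = n := by
  conv_rhs => rw [← I.blocks_sum,
    ← List.dropLast_append_getLast (comp_blocks_ne_nil hn I)]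
  simp

lemma Sc_zero : Sc 0 = 1 := by
  have h1 : ∀ I : Composition 0,
      (1 : ℚ) / ∏ k ∈ Finset.range I.length, ((I.blocks.take (k + 1)).sum : ℚ) = 1 := by
    intro I
    have h : I.blocks = [] := by
      rcases List.eq_nil_or_concat I.blocks with h | ⟨L, b, h⟩
      · exact h
      · exfalso
        have hb := I.blocks_pos (show b ∈ I.blocks by rw [h]; simp)
        have hs := I.blocks_sum
        rw [h] at hs; simp at hs
        omega
    have : I.length = 0 := by simp [Composition.length, h]
    simp [this]
  rw [Sc, Finset.sum_congr rfl fun I _ => h1 I]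
  simp [composition_card]

lemma comp_heq {a b : ℕ} (h : a = b) (I : Composition a) (J : Composition b)
    (hb : I.blocks = J.blocks) : HEq I J := by
  subst h
  exact heq_of_eq (Composition.ext hb)

def sigOfComp {n : ℕ} (hn : 0 < n) (I : Composition n) : (m : Fin n) × Composition m :=
  ⟨⟨I.blocks.dropLast.sum, by
      have := comp_sum_dropLast hn I
      have := I.blocks_pos (List.getLast_mem (comp_blocks_ne_nil hn I))
      omega⟩,
   ⟨I.blocks.dropLast, fun hi => I.blocks_pos (List.dropLast_subset _ hi), rfl⟩⟩

def compOfSig {n : ℕ} (hn : 0 < n) (p : (m : Fin n) × Composition m) : Composition n :=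
  ⟨p.2.blocks ++ [n - p.1], by
      intro i hi
      simp only [List.mem_append, List.mem_singleton] at hi
      rcases hi with hi | rfl
      · exact p.2.blocks_pos hi
      · have := p.1.2; omega,
   by have := p.1.2; have hs := p.2.blocks_sum; simp [hs]⟩

def compEquivSig {n : ℕ} (hn : 0 < n) : Composition n ≃ (m : Fin n) × Composition m where
  toFun := sigOfComp hn
  invFun := compOfSig hn
  left_inv I := by
    apply Composition.ext
    simp only [compOfSig, sigOfComp]
    have h := List.dropLast_append_getLast (comp_blocks_ne_nil hn I)
    have hs := comp_sum_dropLast hn I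
    rw [show n - I.blocks.dropLast.sum = I.blocks.getLast (comp_blocks_ne_nil hn I) by omega]
    exact h
  right_inv p := by
    have hfst : (((p.2.blocks ++ [n - ↑p.1]).dropLast).sum) = (p.1 : ℕ) := by
      rw [List.dropLast_concat, p.2.blocks_sum]
    refine Sigma.ext (Fin.ext ?_) (comp_heq ?_ _ _ ?_)
    · exact hfst
    · exact congrArg _ (Fin.ext hfst)
    · simp [sigOfComp, compOfSig, List.dropLast_concat]

lemma Sc_rec {n : ℕ} (hn : 0 < n) : Sc n = (∑ m : Fin n, Sc m) / n := by
  have key : Sc n = ∑ p : (m : Fin n) × Composition m,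
      (1 / ∏ k ∈ Finset.range p.2.length, ((p.2.blocks.take (k + 1)).sum : ℚ)) / n := by
    rw [Sc, ← Equiv.sum_comp (compEquivSig hn)
      (fun p : (m : Fin n) × Composition m => (1 / ∏ k ∈ Finset.range p.2.length,
        ((p.2.blocks.take (k + 1)).sum : ℚ)) / n)]
    apply Finset.sum_congr rfl
    intro I _
    set p := compEquivSig hn I with hp
    set bs := p.2.blocks with hbs
    have hI : I.blocks = bs ++ [n - p.1] :=
      (congrArg Composition.blocks ((compEquivSig hn).left_inv I)).symm
    have hlen : I.length = bs.length + 1 := by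
      rw [Composition.length, hI]; simp
    have hprod : ∏ k ∈ Finset.range I.length, ((I.blocks.take (k + 1)).sum : ℚ)
        = (∏ k ∈ Finset.range bs.length, ((bs.take (k + 1)).sum : ℚ)) * n := by
      rw [hlen, Finset.prod_range_succ]
      congr 1
      · apply Finset.prod_congr rfl
        intro k hk
        simp only [Finset.mem_range] at hk
        rw [hI, List.take_append_of_le_length (by omega)]
      · rw [show bs.length + 1 = I.blocks.length by rw [hI]; simp,
          List.take_length, I.blocks_sum]
    rw [hprod, div_mul_eq_div_div]
  rw [key, ← Finset.univ_sigma_univ, Finset.sum_sigma, Finset.sum_div]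
  apply Finset.sum_congr rfl
  intro m _
  rw [Sc, Finset.sum_div]

lemma Sc_eq_one : ∀ n : ℕ, Sc n = 1 := by
  intro n
  induction n using Nat.strong_induction_on with
  | _ n ih =>
    rcases Nat.eq_zero_or_pos n with rfl | hn
    · exact Sc_zero
    · rw [Sc_rec hn]
      have : ∑ m : Fin n, Sc m = n := by
        rw [Finset.sum_congr rfl fun (m : Fin n) _ => ih m.1 m.2]
        simp
      rw [this, div_self (by exact_mod_cast hn.ne')]

/-- Summing the counts `n!/(i₁(i₁+i₂)⋯(i₁+⋯+i_r))` of permutations by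
saillance composition over all compositions `I` of `n` gives `n!`. -/
theorem stmt19 (n : ℕ) (hn : 1 ≤ n) :
    ∑ I : Composition n,
        (n.factorial : ℚ) / ∏ k ∈ Finset.range I.length, ((I.blocks.take (k + 1)).sum : ℚ)
      = (n.factorial : ℚ) := by
  have h := Sc_eq_one n
  rw [Sc] at h
  calc ∑ I : Composition n,
        (n.factorial : ℚ) / ∏ k ∈ Finset.range I.length, ((I.blocks.take (k + 1)).sum : ℚ)
      = (n.factorial : ℚ) * ∑ I : Composition n,
        1 / ∏ k ∈ Finset.range I.length, ((I.blocks.take (k + 1)).sum : ℚ) := by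
        rw [Finset.mul_sum]; apply Finset.sum_congr rfl; intro I _; ring
    _ = n.factorial := by rw [h, mul_one]
end
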